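/- arXiv:0704.3393 — 2 statements merged into one kernel-verified Lean document; each statement's English description precedes it below -/
import Mathlib

section
/- The probability measure μ(x,v) = θ(x) γ(x,v) dx dv on 𝕋ⁿ × ℝⁿ is holonomic: for every continuous ℤⁿ-periodic function ψ : ℝⁿ → ℝ, ∫_{[0,1]ⁿ} ∫_{ℝⁿ} (ψ(x+v) − ψ(x)) θ(x) γ(x,v) dv dx = 0. -/
open MeasureTheory
open scoped ENNReal NNReal

noncomputable section

/-- A function on `ℝⁿ` is `ℤⁿ`-periodic. -/
def IsZPeriodic {n : ℕ} (f : (Fin n → ℝ) → ℝ) : Prop :=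
  ∀ (x : Fin n → ℝ) (k : Fin n → ℤ), f (x + fun i => (k i : ℝ)) = f x

/-- The Lagrangian `L(x,v) = ½|v|² − U(x) + ⟨P,v⟩`. -/
def Lag {n : ℕ} (U : (Fin n → ℝ) → ℝ) (P : Fin n → ℝ) (x v : Fin n → ℝ) : ℝ :=
  (1 / 2) * (∑ i, (v i) ^ 2) - U x + ∑ i, P i * v i

/-- The setting of the entropy penalized method. -/
structure EPSetup (n : ℕ) where
  ε : ℝ
  εpos : 0 < ε
  U : (Fin n → ℝ) → ℝ
  P : Fin n → ℝ
  Usmooth : ContDiff ℝ (⊤ : ℕ∞) U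
  Uper : IsZPeriodic U
  φ : (Fin n → ℝ) → ℝ
  φbar : (Fin n → ℝ) → ℝ
  φcont : Continuous φ
  φbarcont : Continuous φbar
  φper : IsZPeriodic φ
  φbarper : IsZPeriodic φbar
  lam : ℝ
  forward_eig : ∀ x, (∫ v, Real.exp (-(Lag U P x v + φ (x + v) - φ x - lam) / ε)) = 1
  backward_eig : ∀ x,
    (∫ v, Real.exp (-(Lag U P (x - v) v + φbar (x - v) - φbar x - lam) / ε)) = 1
  θnorm : (∫ x in Set.Icc (0 : Fin n → ℝ) 1, Real.exp (-(φ x + φbar x) / ε)) = 1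

namespace EPSetup

variable {n : ℕ} (S : EPSetup n)

/-- Transition density `γ(x,v)`. -/
def gamma (x v : Fin n → ℝ) : ℝ :=
  Real.exp (-(Lag S.U S.P x v + S.φ (x + v) - S.φ x - S.lam) / S.ε)

/-- Invariant density `θ(x)`. -/
def θ (x : Fin n → ℝ) : ℝ := Real.exp (-(S.φ x + S.φbar x) / S.ε)

/-- Forward operator `F`. -/
def Fop (g : (Fin n → ℝ) → ℝ) (x : Fin n → ℝ) : ℝ :=
  ∫ v, S.gamma x v * g (x + v)

/-- Backward operator `F*`. -/
def Fstar (f : (Fin n → ℝ) → ℝ) (x : Fin n → ℝ) : ℝ :=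
  ∫ v, (S.θ (x - v) * S.gamma (x - v) v / S.θ x) * f (x - v)

/-- The measure `θ(x) dx` on the fundamental domain `[0,1]ⁿ`. -/
def μθ : Measure (Fin n → ℝ) :=
  (volume.restrict (Set.Icc (0 : Fin n → ℝ) 1)).withDensity fun x => ENNReal.ofReal (S.θ x)

/-- The `L²(θ)` norm. -/
def L2norm (g : (Fin n → ℝ) → ℝ) : ℝ :=
  Real.sqrt (∫ x in Set.Icc (0 : Fin n → ℝ) 1, (g x) ^ 2 * S.θ x)

end EPSetup



section AuxHolonomic

open MeasureTheory

variable {n : ℕ}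

/-- The real vector associated to an integer vector. -/
def intVec {n : ℕ} (k : Fin n → ℤ) : Fin n → ℝ := fun i => (k i : ℝ)

lemma isZPeriodic_shift {f : (Fin n → ℝ) → ℝ} (hf : IsZPeriodic f) (x : Fin n → ℝ)
    (k : Fin n → ℤ) : f (x + intVec k) = f x := hf x k

/-- A continuous periodic function is bounded. -/
lemma periodic_bound {f : (Fin n → ℝ) → ℝ} (hc : Continuous f) (hper : IsZPeriodic f) :
    ∃ B : ℝ, 0 ≤ B ∧ ∀ x, |f x| ≤ B := by
  obtain ⟨C, hC⟩ := (isCompact_Icc (a := (0 : Fin n → ℝ)) (b := 1)).exists_bound_of_continuousOn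
    hc.continuousOn
  refine ⟨max C 0, le_max_right _ _, fun x => ?_⟩
  have hx : x = (fun i => Int.fract (x i)) + intVec (fun i => ⌊x i⌋) := by
    funext i
    exact (Int.fract_add_floor (x i)).symm
  have hmem : (fun i => Int.fract (x i)) ∈ Set.Icc (0 : Fin n → ℝ) 1 := by
    constructor
    · intro i; exact Int.fract_nonneg _
    · intro i; exact (Int.fract_lt_one _).le
  have hfx : f x = f (fun i => Int.fract (x i)) := by
    nth_rewrite 1 [hx]
    exact isZPeriodic_shift hper _ _
  calc |f x| = |f (fun i => Int.fract (x i))| := by rw [hfx]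
    _ ≤ C := by simpa [Real.norm_eq_abs] using hC _ hmem
    _ ≤ max C 0 := le_max_left _ _

lemma lag_continuous {U : (Fin n → ℝ) → ℝ} (hU : Continuous U) (P : Fin n → ℝ) :
    Continuous fun p : (Fin n → ℝ) × (Fin n → ℝ) => Lag U P p.1 p.2 := by
  unfold Lag
  fun_prop

namespace EPSetup

variable (S : EPSetup n)

lemma gamma_continuous : Continuous fun p : (Fin n → ℝ) × (Fin n → ℝ) => S.gamma p.1 p.2 := by
  have hU := S.Usmooth.continuous
  have hφ := S.φcont
  have hε := S.εpos.ne'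
  unfold gamma Lag
  fun_prop

lemma gamma_nonneg (x v : Fin n → ℝ) : 0 ≤ S.gamma x v := (Real.exp_pos _).le

lemma theta_continuous : Continuous S.θ := by
  have hφ := S.φcont
  have hφb := S.φbarcont
  unfold θ
  fun_prop

lemma theta_nonneg (x : Fin n → ℝ) : 0 ≤ S.θ x := (Real.exp_pos _).le

lemma theta_periodic : IsZPeriodic S.θ := by
  intro x k
  unfold θ
  rw [S.φper x k, S.φbarper x k]

/-- Backward transition density. -/
def beta (x v : Fin n → ℝ) : ℝ :=
  Real.exp (-(Lag S.U S.P (x - v) v + S.φbar (x - v) - S.φbar x - S.lam) / S.ε)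

lemma beta_nonneg (x v : Fin n → ℝ) : 0 ≤ S.beta x v := (Real.exp_pos _).le

lemma beta_continuous (x : Fin n → ℝ) : Continuous fun v => S.beta x v := by
  have hU := S.Usmooth.continuous
  have hφb := S.φbarcont
  unfold beta Lag
  fun_prop

lemma lag_shift (x v : Fin n → ℝ) (k : Fin n → ℤ) :
    Lag S.U S.P (x + intVec k) v = Lag S.U S.P x v := by
  unfold Lag
  rw [show S.U (x + intVec k) = S.U x from S.Uper x k]

lemma gamma_shift (x v : Fin n → ℝ) (k : Fin n → ℤ) :
    S.gamma (x + intVec k) v = S.gamma x v := by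
  unfold gamma
  have h1 : x + intVec k + v = (x + v) + intVec k := by ring
  rw [h1, isZPeriodic_shift S.φper, isZPeriodic_shift S.φper, S.lag_shift]

lemma gamma_integrable (x : Fin n → ℝ) : Integrable (S.gamma x) := by
  by_contra h
  have h1 : (∫ v, S.gamma x v) = 1 := S.forward_eig x
  rw [integral_undef h] at h1
  exact zero_ne_one h1

lemma gamma_lintegral (x : Fin n → ℝ) : (∫⁻ v, ENNReal.ofReal (S.gamma x v)) = 1 := by
  rw [← ofReal_integral_eq_lintegral_ofReal (S.gamma_integrable x)
    (Filter.Eventually.of_forall fun v => S.gamma_nonneg x v)]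
  rw [show (∫ v, S.gamma x v) = 1 from S.forward_eig x]
  simp

lemma beta_integrable (x : Fin n → ℝ) : Integrable (S.beta x) := by
  by_contra h
  have h1 : (∫ v, S.beta x v) = 1 := S.backward_eig x
  rw [integral_undef h] at h1
  exact zero_ne_one h1

lemma beta_lintegral (x : Fin n → ℝ) : (∫⁻ v, ENNReal.ofReal (S.beta x v)) = 1 := by
  rw [← ofReal_integral_eq_lintegral_ofReal (S.beta_integrable x)
    (Filter.Eventually.of_forall fun v => S.beta_nonneg x v)]
  rw [show (∫ v, S.beta x v) = 1 from S.backward_eig x]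
  simp

lemma theta_gamma_eq (y v : Fin n → ℝ) :
    S.θ (y - v) * S.gamma (y - v) v = S.θ y * S.beta y v := by
  unfold θ gamma beta
  rw [← Real.exp_add, ← Real.exp_add]
  congr 1
  have h : y - v + v = y := by ring
  rw [h]
  ring

end EPSetup


lemma isZPeriodic_shift_sub {f : (Fin n → ℝ) → ℝ} (hf : IsZPeriodic f) (x : Fin n → ℝ)
    (k : Fin n → ℤ) : f (x - intVec k) = f x := by
  have h : f ((x - intVec k) + intVec k) = f (x - intVec k) := hf (x - intVec k) k
  rw [show (x - intVec k) + intVec k = x from by ring] at h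
  exact h.symm

lemma EPSetup.gamma_shift_sub (S : EPSetup n) (x v : Fin n → ℝ) (k : Fin n → ℤ) :
    S.gamma (x - intVec k) v = S.gamma x v := by
  have h := S.gamma_shift (x - intVec k) v k
  rw [show (x - intVec k) + intVec k = x from by ring] at h
  exact h.symm

/-- The standard lattice `ℤⁿ` as an `AddSubgroup` of `ℝⁿ`. -/
abbrev stdLattice (n : ℕ) : AddSubgroup (Fin n → ℝ) :=
  (Submodule.span ℤ (Set.range ⇑(Pi.basisFun ℝ (Fin n)))).toAddSubgroup

/-- The fundamental domain `[0,1)ⁿ`. -/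
abbrev stdFD (n : ℕ) : Set (Fin n → ℝ) := ZSpan.fundamentalDomain (Pi.basisFun ℝ (Fin n))

instance : Countable (stdLattice n) :=
  inferInstanceAs (Countable (Submodule.span ℤ (Set.range ⇑(Pi.basisFun ℝ (Fin n)))))

lemma stdFD_isAddFundamentalDomain :
    IsAddFundamentalDomain (stdLattice n) (stdFD n) volume :=
  ZSpan.isAddFundamentalDomain' (Pi.basisFun ℝ (Fin n)) volume

lemma stdLattice_coe (g : stdLattice n) : ∃ k : Fin n → ℤ, (g : Fin n → ℝ) = intVec k := by
  have hg : (g : Fin n → ℝ) ∈ Submodule.span ℤ (Set.range ⇑(Pi.basisFun ℝ (Fin n))) := g.2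
  have h := ((Pi.basisFun ℝ (Fin n)).mem_span_iff_repr_mem ℤ _).mp hg
  choose k hk using h
  refine ⟨k, funext fun i => ?_⟩
  have := hk i
  simp only [Pi.basisFun_repr, algebraMap_int_eq, eq_intCast] at this
  simp [intVec, this]

lemma restrict_Icc_eq_stdFD :
    volume.restrict (Set.Icc (0 : Fin n → ℝ) 1) = volume.restrict (stdFD n) := by
  refine (Measure.restrict_congr_set ?_).symm
  show ZSpan.fundamentalDomain (Pi.basisFun ℝ (Fin n)) =ᵐ[volume] Set.Icc 0 1
  rw [ZSpan.fundamentalDomain_pi_basisFun]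
  exact Measure.univ_pi_Ico_ae_eq_Icc (f := (0 : Fin n → ℝ)) (g := 1)

set_option maxHeartbeats 1000000 in
/-- The key holonomy identity, lintegral form, for nonnegative test functions. -/
lemma key_lintegral (S : EPSetup n) (ψ : (Fin n → ℝ) → ℝ) (hc : Continuous ψ)
    (hper : IsZPeriodic ψ) (hpos : ∀ x, 0 ≤ ψ x) :
    (∫⁻ x in stdFD n, ∫⁻ v, ENNReal.ofReal (ψ (x + v) * (S.θ x * S.gamma x v))) =
      ∫⁻ x in stdFD n, ENNReal.ofReal (ψ x * S.θ x) := by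
  classical
  have hfd := stdFD_isAddFundamentalDomain (n := n)
  set Φ : (Fin n → ℝ) → (Fin n → ℝ) → ℝ≥0∞ :=
    fun x y => ENNReal.ofReal (ψ y * (S.θ x * S.gamma x (y - x))) with hΦ
  have hγc := S.gamma_continuous
  have hθc := S.theta_continuous
  have hcont : Continuous fun p : (Fin n → ℝ) × (Fin n → ℝ) =>
      ψ p.2 * (S.θ p.1 * S.gamma p.1 (p.2 - p.1)) := by fun_prop
  have hΦmeas : Measurable (Function.uncurry Φ) :=
    ENNReal.measurable_ofReal.comp hcont.measurable
  -- Step A : translate the inner integral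
  have hinner : ∀ x, (∫⁻ v, ENNReal.ofReal (ψ (x + v) * (S.θ x * S.gamma x v))) =
      ∫⁻ y, Φ x y := by
    intro x
    have h := lintegral_add_left_eq_self (μ := volume) (fun y => Φ x y) x
    rw [← h]
    refine lintegral_congr fun v => ?_
    simp [hΦ, add_sub_cancel_left]
  -- Step D : lattice shift identity for Φ
  have hΦshift : ∀ (m : Fin n → ℤ) (x y : Fin n → ℝ),
      Φ (x - intVec m) y = Φ x (intVec m + y) := by
    intro m x y
    simp only [hΦ]
    rw [isZPeriodic_shift_sub S.theta_periodic, S.gamma_shift_sub,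
      show y - (x - intVec m) = intVec m + y - x from by ring,
      show ψ (intVec m + y) = ψ y from by rw [add_comm]; exact isZPeriodic_shift hper y m]
  -- Step E : unfold x over the lattice
  have hE : ∀ y, (∑' k : stdLattice n, ∫⁻ x in stdFD n, Φ (x - (k : Fin n → ℝ)) y) =
      ∫⁻ x, Φ x y := by
    intro y
    have h1 := hfd.lintegral_eq_tsum'' (fun x => Φ x y)
    calc (∑' k : stdLattice n, ∫⁻ x in stdFD n, Φ (x - (k : Fin n → ℝ)) y)
        = ∑' k : stdLattice n, ∫⁻ x in stdFD n, Φ (((-k : stdLattice n) : Fin n → ℝ) + x) y := by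
          refine tsum_congr fun k => lintegral_congr fun x => ?_
          rw [AddSubgroup.coe_neg, neg_add_eq_sub]
      _ = ∑' k : stdLattice n, ∫⁻ x in stdFD n, Φ ((k : Fin n → ℝ) + x) y :=
          (Equiv.neg (stdLattice n)).tsum_eq
            (fun k : stdLattice n => ∫⁻ x in stdFD n, Φ ((k : Fin n → ℝ) + x) y)
      _ = ∫⁻ x, Φ x y := by
          rw [h1]
          rfl
  -- Step 7 : reflect
  have hrefl : ∀ y, (∫⁻ v, Φ (y - v) y) = ∫⁻ x, Φ x y := by
    intro y
    have hm1 : Measurable fun w => Φ (y + w) y :=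
      hΦmeas.comp ((measurable_const.add measurable_id).prodMk measurable_const)
    calc (∫⁻ v, Φ (y - v) y) = ∫⁻ v, (fun w => Φ (y + w) y) (-v) := by
          refine lintegral_congr fun v => ?_
          simp [sub_eq_add_neg]
      _ = ∫⁻ w, Φ (y + w) y := (Measure.measurePreserving_neg volume).lintegral_comp hm1
      _ = ∫⁻ x, Φ x y := lintegral_add_left_eq_self (fun w => Φ w y) y
  -- Step 8 : backward eigenvalue computation
  have hback : ∀ y, (∫⁻ v, Φ (y - v) y) = ENNReal.ofReal (ψ y * S.θ y) := by
    intro y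
    have hpt : ∀ v, Φ (y - v) y =
        ENNReal.ofReal (ψ y * S.θ y) * ENNReal.ofReal (S.beta y v) := by
      intro v
      simp only [hΦ]
      rw [show y - (y - v) = v from by ring]
      rw [show ψ y * (S.θ (y - v) * S.gamma (y - v) v) = (ψ y * S.θ y) * S.beta y v from by
        rw [S.theta_gamma_eq y v]; ring]
      rw [ENNReal.ofReal_mul (mul_nonneg (hpos y) (S.theta_nonneg y))]
    calc (∫⁻ v, Φ (y - v) y)
        = ∫⁻ v, ENNReal.ofReal (ψ y * S.θ y) * ENNReal.ofReal (S.beta y v) :=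
          lintegral_congr hpt
      _ = ENNReal.ofReal (ψ y * S.θ y) * ∫⁻ v, ENNReal.ofReal (S.beta y v) :=
          lintegral_const_mul' _ _ ENNReal.ofReal_ne_top
      _ = ENNReal.ofReal (ψ y * S.θ y) := by rw [S.beta_lintegral y, mul_one]
  -- measurability for the tsum swap
  have htsmeas : ∀ k : stdLattice n, AEMeasurable
      (fun y => ∫⁻ x in stdFD n, Φ (x - (k : Fin n → ℝ)) y)
      (volume.restrict (stdFD n)) := by
    intro k
    have : Measurable (Function.uncurry fun x y => Φ (x - (k : Fin n → ℝ)) y) :=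
      hΦmeas.comp ((measurable_fst.sub measurable_const).prodMk measurable_snd)
    exact (Measurable.lintegral_prod_left this).aemeasurable
  -- Assemble everything
  calc (∫⁻ x in stdFD n, ∫⁻ v, ENNReal.ofReal (ψ (x + v) * (S.θ x * S.gamma x v)))
      = ∫⁻ x in stdFD n, ∫⁻ y, Φ x y := lintegral_congr fun x => hinner x
    _ = ∫⁻ y, ∫⁻ x in stdFD n, Φ x y := lintegral_lintegral_swap hΦmeas.aemeasurable
    _ = ∑' k : stdLattice n, ∫⁻ y in stdFD n,
          ∫⁻ x in stdFD n, Φ x ((k : Fin n → ℝ) + y) := by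
        have := hfd.lintegral_eq_tsum'' (fun y => ∫⁻ x in stdFD n, Φ x y)
        rw [this]
        rfl
    _ = ∑' k : stdLattice n, ∫⁻ y in stdFD n,
          ∫⁻ x in stdFD n, Φ (x - (k : Fin n → ℝ)) y := by
        refine tsum_congr fun k => lintegral_congr fun y => lintegral_congr fun x => ?_
        obtain ⟨m, hm⟩ := stdLattice_coe k
        rw [hm, hΦshift m x y]
    _ = ∫⁻ y in stdFD n, ∑' k : stdLattice n,
          ∫⁻ x in stdFD n, Φ (x - (k : Fin n → ℝ)) y := (lintegral_tsum htsmeas).symm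
    _ = ∫⁻ y in stdFD n, ∫⁻ x, Φ x y := lintegral_congr fun y => hE y
    _ = ∫⁻ y in stdFD n, ∫⁻ v, Φ (y - v) y := lintegral_congr fun y => (hrefl y).symm
    _ = ∫⁻ y in stdFD n, ENNReal.ofReal (ψ y * S.θ y) := lintegral_congr fun y => hback y


set_option maxHeartbeats 1000000 in
/-- Real-integral version of the key identity, for nonnegative bounded test functions. -/
lemma key_real (S : EPSetup n) (ψ : (Fin n → ℝ) → ℝ) (hc : Continuous ψ)
    (hper : IsZPeriodic ψ) (hpos : ∀ x, 0 ≤ ψ x) (B : ℝ) (hB : ∀ x, ψ x ≤ B) :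
    (∫ x in Set.Icc (0 : Fin n → ℝ) 1, ∫ v, ψ (x + v) * (S.θ x * S.gamma x v)) =
      ∫ x in Set.Icc (0 : Fin n → ℝ) 1, ψ x * S.θ x := by
  have hγc := S.gamma_continuous
  have hθc := S.theta_continuous
  have hB0 : 0 ≤ B := le_trans (hpos 0) (hB 0)
  have hF : Continuous fun p : (Fin n → ℝ) × (Fin n → ℝ) =>
      ψ (p.1 + p.2) * (S.θ p.1 * S.gamma p.1 p.2) := by fun_prop
  set I : (Fin n → ℝ) → ℝ≥0∞ :=
    fun x => ∫⁻ v, ENNReal.ofReal (ψ (x + v) * (S.θ x * S.gamma x v)) with hI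
  have hImeas : Measurable I :=
    Measurable.lintegral_prod_right (ENNReal.measurable_ofReal.comp hF.measurable)
  have hIfin : ∀ x, I x ≤ ENNReal.ofReal (B * S.θ x) := by
    intro x
    have h1 : I x ≤ ∫⁻ v, ENNReal.ofReal ((B * S.θ x) * S.gamma x v) := by
      refine lintegral_mono fun v => ENNReal.ofReal_le_ofReal ?_
      rw [mul_assoc]
      exact mul_le_mul_of_nonneg_right (hB _)
        (mul_nonneg (S.theta_nonneg x) (S.gamma_nonneg x v))
    refine h1.trans (le_of_eq ?_)
    have h2 : ∀ v, ENNReal.ofReal ((B * S.θ x) * S.gamma x v) =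
        ENNReal.ofReal (B * S.θ x) * ENNReal.ofReal (S.gamma x v) := fun v =>
      ENNReal.ofReal_mul (mul_nonneg hB0 (S.theta_nonneg x))
    rw [lintegral_congr h2, lintegral_const_mul' _ _ ENNReal.ofReal_ne_top,
      S.gamma_lintegral x, mul_one]
  have hIlt : ∀ x, I x < ⊤ := fun x => lt_of_le_of_lt (hIfin x) ENNReal.ofReal_lt_top
  have hinner : ∀ x, (∫ v, ψ (x + v) * (S.θ x * S.gamma x v)) = (I x).toReal := by
    intro x
    rw [integral_eq_lintegral_of_nonneg_ae
      (Filter.Eventually.of_forall fun v =>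
        mul_nonneg (hpos _) (mul_nonneg (S.theta_nonneg x) (S.gamma_nonneg x v)))
      (Continuous.aestronglyMeasurable (by fun_prop))]
  have hRHS : (∫ x in Set.Icc (0 : Fin n → ℝ) 1, ψ x * S.θ x) =
      (∫⁻ x in Set.Icc (0 : Fin n → ℝ) 1, ENNReal.ofReal (ψ x * S.θ x)).toReal := by
    rw [integral_eq_lintegral_of_nonneg_ae
      (Filter.Eventually.of_forall fun x => mul_nonneg (hpos x) (S.theta_nonneg x))
      (Continuous.aestronglyMeasurable (by fun_prop))]
  calc (∫ x in Set.Icc (0 : Fin n → ℝ) 1, ∫ v, ψ (x + v) * (S.θ x * S.gamma x v))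
      = ∫ x in Set.Icc (0 : Fin n → ℝ) 1, (I x).toReal := by
        exact integral_congr_ae (Filter.Eventually.of_forall fun x => hinner x)
    _ = (∫⁻ x in Set.Icc (0 : Fin n → ℝ) 1, I x).toReal :=
        integral_toReal hImeas.aemeasurable (Filter.Eventually.of_forall fun x => hIlt x)
    _ = (∫⁻ x in Set.Icc (0 : Fin n → ℝ) 1, ENNReal.ofReal (ψ x * S.θ x)).toReal := by
        rw [restrict_Icc_eq_stdFD, key_lintegral S ψ hc hper hpos]
    _ = ∫ x in Set.Icc (0 : Fin n → ℝ) 1, ψ x * S.θ x := hRHS.symm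


end AuxHolonomic

/-- The probability measure `μ(x,v) = θ(x) γ(x,v) dx dv` is holonomic:
for every continuous `ℤⁿ`-periodic `ψ`, `∫∫ (ψ(x+v) − ψ(x)) θ(x) γ(x,v) dv dx = 0`. -/
theorem mu_holonomic {n : ℕ} (hn : 1 ≤ n) (S : EPSetup n)
    (ψ : (Fin n → ℝ) → ℝ) (hψc : Continuous ψ) (hψper : IsZPeriodic ψ) :
    (∫ x in Set.Icc (0 : Fin n → ℝ) 1, ∫ v, (ψ (x + v) - ψ x) * (S.θ x * S.gamma x v)) = 0 := by
  classical
  obtain ⟨B, hB0, hB⟩ := periodic_bound hψc hψper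
  obtain ⟨Bθ, hBθ0, hBθ⟩ := periodic_bound S.theta_continuous S.theta_periodic
  have hγc := S.gamma_continuous
  have hθc := S.theta_continuous
  set ψ₁ : (Fin n → ℝ) → ℝ := fun x => ψ x + B with hψ₁
  have hψ₁c : Continuous ψ₁ := by fun_prop
  have hψ₁per : IsZPeriodic ψ₁ := by
    intro x k
    simp only [hψ₁]
    rw [hψper x k]
  have hψ₁pos : ∀ x, 0 ≤ ψ₁ x := fun x => by
    have := abs_le.mp (hB x)
    simp only [hψ₁]; linarith [this.1]
  have hψ₁le : ∀ x, ψ₁ x ≤ 2 * B := fun x => by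
    have := abs_le.mp (hB x)
    simp only [hψ₁]; linarith [this.2]
  have hkey := key_real S ψ₁ hψ₁c hψ₁per hψ₁pos (2 * B) hψ₁le
  -- integrability of the inner integrands
  have hθγpos : ∀ x v, 0 ≤ S.θ x * S.gamma x v := fun x v =>
    mul_nonneg (S.theta_nonneg x) (S.gamma_nonneg x v)
  have hint1 : ∀ x, Integrable fun v => ψ₁ (x + v) * (S.θ x * S.gamma x v) := by
    intro x
    refine Integrable.mono' (((S.gamma_integrable x).const_mul (S.θ x)).const_mul (2 * B))
      (Continuous.aestronglyMeasurable (by fun_prop))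
      (Filter.Eventually.of_forall fun v => ?_)
    rw [Real.norm_eq_abs, abs_mul, abs_of_nonneg (hθγpos x v), abs_of_nonneg (hψ₁pos _)]
    exact mul_le_mul_of_nonneg_right (hψ₁le _) (hθγpos x v)
  have hint2 : ∀ x, Integrable fun v => (ψ x + B) * (S.θ x * S.gamma x v) := fun x =>
    ((S.gamma_integrable x).const_mul (S.θ x)).const_mul (ψ x + B)
  have hgint : ∀ x, (∫ v, S.gamma x v) = 1 := fun x => S.forward_eig x
  -- the inner integral decomposition
  have hinner : ∀ x, (∫ v, (ψ (x + v) - ψ x) * (S.θ x * S.gamma x v)) =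
      (∫ v, ψ₁ (x + v) * (S.θ x * S.gamma x v)) - (ψ x + B) * S.θ x := by
    intro x
    have hptw : (fun v => (ψ (x + v) - ψ x) * (S.θ x * S.gamma x v)) =
        fun v => ψ₁ (x + v) * (S.θ x * S.gamma x v) -
          (ψ x + B) * (S.θ x * S.gamma x v) := by
      funext v
      simp only [hψ₁]
      ring
    rw [hptw, integral_sub (hint1 x) (hint2 x)]
    congr 1
    have h2 : (fun v => (ψ x + B) * (S.θ x * S.gamma x v)) =
        fun v => ((ψ x + B) * S.θ x) * S.gamma x v := by
      funext v; ring
    rw [h2, integral_const_mul, hgint x, mul_one]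
  -- integrability of the outer pieces
  have hF : Continuous fun p : (Fin n → ℝ) × (Fin n → ℝ) =>
      ψ₁ (p.1 + p.2) * (S.θ p.1 * S.gamma p.1 p.2) := by fun_prop
  set A : (Fin n → ℝ) → ℝ := fun x => ∫ v, ψ₁ (x + v) * (S.θ x * S.gamma x v) with hA
  have hAmeas : StronglyMeasurable A :=
    hF.stronglyMeasurable.integral_prod_right'
  have hAbound : ∀ x, ‖A x‖ ≤ 2 * B * Bθ := by
    intro x
    have hθx : S.θ x ≤ Bθ := le_trans (le_abs_self _) (hBθ x)
    have h1 : A x ≤ (2 * B * S.θ x) * ∫ v, S.gamma x v := by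
      rw [← integral_const_mul]
      refine integral_mono (hint1 x) ((S.gamma_integrable x).const_mul _) fun v => ?_
      calc ψ₁ (x + v) * (S.θ x * S.gamma x v)
          ≤ (2 * B) * (S.θ x * S.gamma x v) :=
            mul_le_mul_of_nonneg_right (hψ₁le _) (hθγpos x v)
        _ = 2 * B * S.θ x * S.gamma x v := by ring
    rw [hgint x, mul_one] at h1
    have h0 : 0 ≤ A x :=
      integral_nonneg fun v => mul_nonneg (hψ₁pos _) (hθγpos x v)
    rw [Real.norm_eq_abs, abs_of_nonneg h0]
    calc A x ≤ 2 * B * S.θ x := h1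
      _ ≤ 2 * B * Bθ := by nlinarith [S.theta_nonneg x]
  have hAint : IntegrableOn A (Set.Icc (0 : Fin n → ℝ) 1) volume := by
    refine Integrable.mono' (integrableOn_const isCompact_Icc.measure_lt_top.ne)
      hAmeas.aestronglyMeasurable (Filter.Eventually.of_forall fun x => hAbound x)
  have hCint : IntegrableOn (fun x => (ψ x + B) * S.θ x)
      (Set.Icc (0 : Fin n → ℝ) 1) volume := by
    refine ContinuousOn.integrableOn_compact isCompact_Icc ?_
    exact Continuous.continuousOn (by fun_prop)
  calc (∫ x in Set.Icc (0 : Fin n → ℝ) 1, ∫ v, (ψ (x + v) - ψ x) * (S.θ x * S.gamma x v))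
      = ∫ x in Set.Icc (0 : Fin n → ℝ) 1, (A x - (ψ x + B) * S.θ x) :=
        integral_congr_ae (Filter.Eventually.of_forall fun x => hinner x)
    _ = (∫ x in Set.Icc (0 : Fin n → ℝ) 1, A x) -
        ∫ x in Set.Icc (0 : Fin n → ℝ) 1, (ψ x + B) * S.θ x :=
        integral_sub hAint hCint
    _ = 0 := by
        rw [show (∫ x in Set.Icc (0 : Fin n → ℝ) 1, A x) =
            ∫ x in Set.Icc (0 : Fin n → ℝ) 1, ψ₁ x * S.θ x from hkey]
        simp only [hψ₁]
        exact sub_self _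
end
end

section
/- If j > n/2, then for every g ∈ L²(θ) the iterate F^j(g) agrees almost everywhere with a Hölder continuous ℤⁿ-periodic function. -/
open MeasureTheory
open scoped ENNReal NNReal

noncomputable section

namespace EPAux

variable {n : ℕ}

def ivec (k : Fin n → ℤ) : Fin n → ℝ := fun i => (k i : ℝ)

def fractv (x : Fin n → ℝ) : Fin n → ℝ := fun i => Int.fract (x i)

def floorv (x : Fin n → ℝ) : Fin n → ℤ := fun i => ⌊x i⌋

def Q (v : Fin n → ℝ) : ℝ := ∑ i, v i ^ 2

lemma Q_nonneg (v : Fin n → ℝ) : 0 ≤ Q v := Finset.sum_nonneg fun i _ => sq_nonneg _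

lemma fractv_add_ivec_floorv (x : Fin n → ℝ) : x = fractv x + ivec (floorv x) := by
  funext i
  show x i = Int.fract (x i) + (⌊x i⌋ : ℝ)
  rw [Int.fract]
  ring

lemma fractv_mem (x : Fin n → ℝ) : fractv x ∈ Set.Icc (0 : Fin n → ℝ) 1 := by
  rw [Set.mem_Icc]
  constructor <;> intro i
  · exact Int.fract_nonneg _
  · exact (Int.fract_lt_one _).le

lemma zero_mem_Icc01 : (0 : Fin n → ℝ) ∈ Set.Icc (0 : Fin n → ℝ) 1 := by
  rw [Set.mem_Icc]
  exact ⟨le_refl _, fun i => zero_le_one⟩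

lemma periodic_eq_fractv {f : (Fin n → ℝ) → ℝ} (hf : IsZPeriodic f) (x : Fin n → ℝ) :
    f x = f (fractv x) := by
  conv_lhs => rw [fractv_add_ivec_floorv x]
  exact hf (fractv x) (floorv x)

lemma bounded_of_periodic_continuous {f : (Fin n → ℝ) → ℝ} (hf : Continuous f)
    (hper : IsZPeriodic f) : ∃ M : ℝ, 0 ≤ M ∧ ∀ x, |f x| ≤ M := by
  obtain ⟨z, _, hz⟩ := (isCompact_Icc (a := (0 : Fin n → ℝ)) (b := 1)).exists_isMaxOn
    ⟨0, zero_mem_Icc01⟩ hf.abs.continuousOn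
  exact ⟨|f z|, abs_nonneg _, fun x => by
    rw [periodic_eq_fractv hper]; exact hz (fractv_mem x)⟩

lemma lipschitz_of_periodic_smooth {f : (Fin n → ℝ) → ℝ} (hf : ContDiff ℝ (⊤ : ℕ∞) f)
    (hper : IsZPeriodic f) : ∃ K : ℝ, 0 ≤ K ∧ ∀ x y, |f x - f y| ≤ K * ‖x - y‖ := by
  have hdiff : Differentiable ℝ f := hf.differentiable (by simp)
  have hfderiv_per : ∀ (x : Fin n → ℝ) (k : Fin n → ℤ),
      fderiv ℝ f (x + ivec k) = fderiv ℝ f x := by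
    intro x k
    have h1 : HasFDerivAt (fun y : Fin n → ℝ => f (y + ivec k))
        (fderiv ℝ f (x + ivec k)) x := by
      have h0 := (hdiff (x + ivec k)).hasFDerivAt
      have h2 : HasFDerivAt (fun y : Fin n → ℝ => y + ivec k)
          (ContinuousLinearMap.id ℝ (Fin n → ℝ)) x := (hasFDerivAt_id x).add_const _
      simpa [Function.comp_def] using h0.comp x h2
    have h3 : (fun y : Fin n → ℝ => f (y + ivec k)) = f := funext fun y => hper y k
    rw [h3] at h1
    exact h1.fderiv.symm
  obtain ⟨z, _, hz⟩ := (isCompact_Icc (a := (0 : Fin n → ℝ)) (b := 1)).exists_isMaxOn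
    ⟨0, zero_mem_Icc01⟩ ((hf.continuous_fderiv (by simp)).norm.continuousOn)
  have hbd : ∀ x, ‖fderiv ℝ f x‖ ≤ ‖fderiv ℝ f z‖ := by
    intro x
    conv_lhs => rw [fractv_add_ivec_floorv x]
    rw [hfderiv_per]
    exact hz (fractv_mem x)
  refine ⟨‖fderiv ℝ f z‖, norm_nonneg _, fun x y => ?_⟩
  have := convex_univ.norm_image_sub_le_of_norm_fderiv_le (𝕜 := ℝ) (f := f) (s := Set.univ)
    (fun w _ => hdiff w) (fun w _ => hbd w) (Set.mem_univ y) (Set.mem_univ x)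
  simpa [Real.norm_eq_abs] using this

lemma abs_exp_sub_exp_le (s t : ℝ) :
    |Real.exp s - Real.exp t| ≤ |s - t| * max (Real.exp s) (Real.exp t) := by
  wlog h : t ≤ s generalizing s t
  · rw [abs_sub_comm, abs_sub_comm s t, max_comm]
    exact this _ _ (le_of_not_ge h)
  have h1 : Real.exp t ≤ Real.exp s := Real.exp_le_exp.2 h
  rw [abs_of_nonneg (by linarith), abs_of_nonneg (by linarith), max_eq_left h1]
  have h2 : Real.exp s - Real.exp t = Real.exp s * (1 - Real.exp (t - s)) := by
    rw [mul_sub, mul_one, ← Real.exp_add]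
    ring_nf
  have h3 : 1 - Real.exp (t - s) ≤ s - t := by
    have := Real.add_one_le_exp (t - s); linarith
  calc Real.exp s - Real.exp t = Real.exp s * (1 - Real.exp (t - s)) := h2
    _ ≤ Real.exp s * (s - t) := mul_le_mul_of_nonneg_left h3 (Real.exp_pos s).le
    _ = (s - t) * Real.exp s := mul_comm _ _


/-- Shifting a set lintegral by a translation. -/
lemma lintegral_shift (G : (Fin n → ℝ) → ℝ≥0∞) (a : Fin n → ℝ) (s : Set (Fin n → ℝ)) :
    ∫⁻ u in s, G (a + u) = ∫⁻ z in (fun u => a + u) '' s, G z :=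
  (measurePreserving_add_left volume a).setLIntegral_comp_emb
    (measurableEmbedding_addLeft a) G s

/-- Integral of a periodic function over any translated unit cube is at most `2 ^ n`
times the integral over the standard cube. -/
lemma cell_lintegral_translate_le {G : (Fin n → ℝ) → ℝ≥0∞}
    (hper : ∀ (x : Fin n → ℝ) (k : Fin n → ℤ), G (x + ivec k) = G x) (y : Fin n → ℝ) :
    ∫⁻ u in Set.Icc (0 : Fin n → ℝ) 1, G (y + u) ≤
      (2 : ℝ≥0∞) ^ n * ∫⁻ u in Set.Icc (0 : Fin n → ℝ) 1, G u := by
  have step0 : ∀ u : Fin n → ℝ, G (y + u) = G (fractv y + u) := by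
    intro u
    have hyu : y + u = (fractv y + u) + ivec (floorv y) := by
      conv_lhs => rw [fractv_add_ivec_floorv y]
      abel
    rw [hyu, hper]
  simp_rw [step0]
  rw [lintegral_shift]
  have himg : (fun u => fractv y + u) '' Set.Icc (0 : Fin n → ℝ) 1 ⊆
      Set.Icc (0 : Fin n → ℝ) 2 := by
    rintro _ ⟨u, hu, rfl⟩
    rw [Set.mem_Icc] at hu ⊢
    constructor <;> intro i
    · exact add_nonneg (Int.fract_nonneg _) (hu.1 i)
    · have h1 : Int.fract (y i) ≤ 1 := (Int.fract_lt_one _).le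
      have h2 : u i ≤ 1 := hu.2 i
      show Int.fract (y i) + u i ≤ (2 : ℝ)
      linarith
  refine le_trans (lintegral_mono_set himg) ?_
  have hcover : Set.Icc (0 : Fin n → ℝ) 2 ⊆
      ⋃ b : Fin n → Bool, (fun u => (fun i => if b i then (1 : ℝ) else 0) + u) ''
        Set.Icc (0 : Fin n → ℝ) 1 := by
    intro z hz
    rw [Set.mem_Icc] at hz
    refine Set.mem_iUnion.2 ⟨fun i => decide (1 < z i),
      ⟨z - fun i => if decide (1 < z i) then (1:ℝ) else 0, ?_, by ring⟩⟩
    refine Set.mem_Icc.2 ⟨fun i => ?_, fun i => ?_⟩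
    · have h1 : (0:ℝ) ≤ z i := by simpa using hz.1 i
      have h2 : z i ≤ 2 := by simpa using hz.2 i
      show (0:ℝ) ≤ z i - (if decide (1 < z i) then (1:ℝ) else 0)
      by_cases h : 1 < z i <;> simp [h] <;> linarith
    · have h1 : (0:ℝ) ≤ z i := by simpa using hz.1 i
      have h2 : z i ≤ 2 := by simpa using hz.2 i
      show z i - (if decide (1 < z i) then (1:ℝ) else 0) ≤ (1 : Fin n → ℝ) i
      rw [Pi.one_apply]
      by_cases h : 1 < z i <;> simp [h] <;> linarith
  refine le_trans (lintegral_mono_set hcover) ?_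
  refine le_trans (lintegral_iUnion_le _ _) ?_
  have hterm : ∀ b : Fin n → Bool,
      ∫⁻ z in (fun u => (fun i => if b i then (1 : ℝ) else 0) + u) '' Set.Icc (0 : Fin n → ℝ) 1, G z
        = ∫⁻ u in Set.Icc (0 : Fin n → ℝ) 1, G u := by
    intro b
    rw [← lintegral_shift]
    refine setLIntegral_congr_fun measurableSet_Icc (fun u _ => ?_)
    have : (fun i => if b i then (1 : ℝ) else 0) + u = u + ivec (fun i => if b i then 1 else 0) := by
      funext i
      simp [ivec]
      by_cases h : b i <;> simp [h] <;> ring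
    show G ((fun i => if b i then (1 : ℝ) else 0) + u) = G u
    rw [this, hper]
  simp_rw [hterm]
  rw [tsum_fintype, Finset.sum_const, Finset.card_univ]
  have hcard : Fintype.card (Fin n → Bool) = 2 ^ n := by
    simp [Fintype.card_fun]
  rw [hcard, nsmul_eq_mul]
  push_cast
  exact le_rfl

lemma continuous_Q : Continuous (Q : (Fin n → ℝ) → ℝ) :=
  continuous_finset_sum _ fun i _ => (continuous_apply i).pow 2

lemma measurable_gaussQ (c : ℝ) :
    Measurable fun v : Fin n → ℝ => ENNReal.ofReal (Real.exp (-c * Q v)) :=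
  (Real.continuous_exp.comp (continuous_const.mul continuous_Q)).measurable.ennreal_ofReal

lemma gauss_lintegral_ne_top {c : ℝ} (hc : 0 < c) :
    (∫⁻ v : Fin n → ℝ, ENNReal.ofReal (Real.exp (-c * Q v))) ≠ ∞ := by
  have hprod : (fun v : Fin n → ℝ => Real.exp (-c * Q v)) =
      fun v => ∏ i, Real.exp (-c * (v i) ^ 2) := by
    funext v
    rw [← Real.exp_sum]
    congr 1
    rw [Q, Finset.mul_sum]
  have hint : Integrable (fun v : Fin n → ℝ => Real.exp (-c * Q v)) := by
    rw [hprod]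
    exact Integrable.fintype_prod fun _ => integrable_exp_neg_mul_sq hc
  have h2 := hint.2
  rw [hasFiniteIntegral_iff_norm] at h2
  have : (fun v : Fin n → ℝ => ENNReal.ofReal ‖Real.exp (-c * Q v)‖) =
      fun v => ENNReal.ofReal (Real.exp (-c * Q v)) := by
    funext v
    rw [Real.norm_eq_abs, abs_of_pos (Real.exp_pos _)]
  rw [this] at h2
  exact h2.ne

/-- The key uniform bound: integrating a periodic function against a Gaussian weight is
controlled by the integral over the unit cube, uniformly in translations. -/
lemma gauss_cell_bound {c : ℝ} (hc : 0 < c) :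
    ∃ CB : ℝ≥0∞, CB ≠ ∞ ∧ ∀ G : (Fin n → ℝ) → ℝ≥0∞, Measurable G →
      (∀ (x : Fin n → ℝ) (k : Fin n → ℤ), G (x + ivec k) = G x) → ∀ x : Fin n → ℝ,
      (∫⁻ v, ENNReal.ofReal (Real.exp (-c * Q v)) * G (x + v)) ≤
        CB * ∫⁻ u in Set.Icc (0 : Fin n → ℝ) 1, G u := by
  classical
  set Γ : ℝ≥0∞ := ∫⁻ w : Fin n → ℝ, ENNReal.ofReal (Real.exp (-(c/2) * Q w)) with hΓ
  have hΓne : Γ ≠ ∞ := gauss_lintegral_ne_top (by linarith)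
  refine ⟨ENNReal.ofReal (Real.exp (c * n)) * Γ * 2 ^ n, ?_, ?_⟩
  · exact ENNReal.mul_ne_top (ENNReal.mul_ne_top ENNReal.ofReal_ne_top hΓne)
      (by simp [ENNReal.pow_ne_top])
  intro G hG hper x
  set I : ℝ≥0∞ := ∫⁻ u in Set.Icc (0 : Fin n → ℝ) 1, G u with hI
  set ψ : (Fin n → ℝ) → ℝ≥0∞ := fun v => ENNReal.ofReal (Real.exp (-c * Q v)) with hψ
  have hψm : Measurable ψ := measurable_gaussQ c
  set F : (Fin n → ℝ) → ℝ≥0∞ := fun v => ψ v * G (x + v) with hF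
  have hFm : Measurable F := hψm.mul (hG.comp (measurable_const.add measurable_id))
  have vol1 : volume (Set.Icc (0 : Fin n → ℝ) 1) = 1 := by
    rw [Real.volume_Icc_pi]
    simp
  have h1 : ∀ u : Fin n → ℝ, (∫⁻ w, F (w + u)) = ∫⁻ v, F v := fun u =>
    (measurePreserving_add_right volume u).lintegral_comp hFm
  have h2 : (∫⁻ u in Set.Icc (0 : Fin n → ℝ) 1, ∫⁻ w, F (w + u)) = ∫⁻ v, F v := by
    simp_rw [h1]
    rw [setLIntegral_const, vol1, mul_one]
  have h3 : (∫⁻ u in Set.Icc (0 : Fin n → ℝ) 1, ∫⁻ w, F (w + u)) =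
      ∫⁻ w, ∫⁻ u in Set.Icc (0 : Fin n → ℝ) 1, F (w + u) :=
    lintegral_lintegral_swap ((hFm.comp (measurable_snd.add measurable_fst)).aemeasurable)
  have h4 : ∀ w : Fin n → ℝ, (∫⁻ u in Set.Icc (0 : Fin n → ℝ) 1, F (w + u)) ≤
      (ENNReal.ofReal (Real.exp (c * n)) * ENNReal.ofReal (Real.exp (-(c/2) * Q w))) *
        (2 ^ n * I) := by
    intro w
    set Kw : ℝ≥0∞ :=
      ENNReal.ofReal (Real.exp (c * n)) * ENNReal.ofReal (Real.exp (-(c/2) * Q w)) with hKw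
    have hψle : ∀ u ∈ Set.Icc (0 : Fin n → ℝ) 1, ψ (w + u) ≤ Kw := by
      intro u hu
      rw [Set.mem_Icc] at hu
      have hui : ∀ i, 0 ≤ u i ∧ u i ≤ 1 := fun i => ⟨by simpa using hu.1 i, by simpa using hu.2 i⟩
      have hQ : Q w / 2 - n ≤ Q (w + u) := by
        have hterm : ∀ i, (w i) ^ 2 / 2 - 1 ≤ (w i + u i) ^ 2 := by
          intro i
          have h1 := (hui i).1
          have h2 := (hui i).2
          nlinarith [sq_nonneg (w i + 2 * u i), sq_nonneg (u i)]
        have hsum := Finset.sum_le_sum fun i (_ : i ∈ Finset.univ) => hterm i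
        have : ∑ i, ((w i) ^ 2 / 2 - 1) = Q w / 2 - n := by
          rw [Finset.sum_sub_distrib]
          simp [Q, Finset.sum_div]
        rw [this] at hsum
        calc Q w / 2 - (n:ℝ) ≤ ∑ i, (w i + u i) ^ 2 := hsum
          _ = Q (w + u) := by simp [Q]
      rw [hψ]
      have : (-c) * Q (w + u) ≤ c * n + (-(c/2) * Q w) := by nlinarith
      calc ENNReal.ofReal (Real.exp (-c * Q (w + u)))
          ≤ ENNReal.ofReal (Real.exp (c * n + (-(c/2) * Q w))) :=
            ENNReal.ofReal_le_ofReal (Real.exp_le_exp.2 this)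
        _ = Kw := by rw [Real.exp_add, ENNReal.ofReal_mul (Real.exp_pos _).le]
    calc (∫⁻ u in Set.Icc (0 : Fin n → ℝ) 1, F (w + u))
        ≤ ∫⁻ u in Set.Icc (0 : Fin n → ℝ) 1, Kw * G ((x + w) + u) := by
          refine setLIntegral_mono (measurable_const.mul
            (hG.comp (measurable_const.add measurable_id))) fun u hu => ?_
          rw [hF]
          have hx : x + (w + u) = (x + w) + u := by ring
          simp only []
          rw [hx]
          exact mul_le_mul_left (hψle u hu) _
      _ = Kw * ∫⁻ u in Set.Icc (0 : Fin n → ℝ) 1, G ((x + w) + u) :=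
          lintegral_const_mul _ (hG.comp (measurable_const.add measurable_id))
      _ ≤ Kw * (2 ^ n * I) := mul_le_mul_right (cell_lintegral_translate_le hper (x + w)) _
  calc (∫⁻ v, ψ v * G (x + v)) = ∫⁻ v, F v := rfl
    _ = ∫⁻ w, ∫⁻ u in Set.Icc (0 : Fin n → ℝ) 1, F (w + u) := by rw [← h3, h2]
    _ ≤ ∫⁻ w, (ENNReal.ofReal (Real.exp (c * n)) *
          ENNReal.ofReal (Real.exp (-(c/2) * Q w))) * (2 ^ n * I) := lintegral_mono h4
    _ = ((∫⁻ w, ENNReal.ofReal (Real.exp (c * n)) * ENNReal.ofReal (Real.exp (-(c/2) * Q w)))) *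
          (2 ^ n * I) := lintegral_mul_const _ ((measurable_const.mul (measurable_gaussQ (c/2))))
    _ = (ENNReal.ofReal (Real.exp (c * n)) * Γ) * (2 ^ n * I) := by
        rw [lintegral_const_mul _ (measurable_gaussQ (c/2))]
    _ = (ENNReal.ofReal (Real.exp (c * n)) * Γ * 2 ^ n) * I := by ring


lemma measurable_fractv : Measurable (fractv : (Fin n → ℝ) → (Fin n → ℝ)) :=
  measurable_pi_lambda _ fun i => measurable_fract.comp (measurable_pi_apply i)

lemma null_translate {N : Set (Fin n → ℝ)} (hN : volume N = 0) (a : Fin n → ℝ) :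
    volume ((fun z => a + z) '' N) = 0 := by
  obtain ⟨t, hsub, htm, ht0⟩ := exists_measurable_superset_of_null hN
  have himg : (fun z => a + z) '' N ⊆ (fun z => -a + z) ⁻¹' t := by
    rintro _ ⟨z, hz, rfl⟩
    show -a + (a + z) ∈ t
    rw [neg_add_cancel_left]
    exact hsub hz
  refine measure_mono_null himg ?_
  rw [(measurePreserving_add_left volume (-a)).measure_preimage htm.nullMeasurableSet]
  exact ht0

lemma null_preimage_add {N : Set (Fin n → ℝ)} (hN : volume N = 0) (a : Fin n → ℝ) :
    volume ((fun z => a + z) ⁻¹' N) = 0 := by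
  obtain ⟨t, hsub, htm, ht0⟩ := exists_measurable_superset_of_null hN
  refine measure_mono_null (Set.preimage_mono hsub) ?_
  rw [(measurePreserving_add_left volume a).measure_preimage htm.nullMeasurableSet]
  exact ht0

end EPAux

namespace EPAux
open EPSetup

lemma key_decay {C ε q : ℝ} (hC : 0 ≤ C) (hε : 0 < ε) (hq : 0 ≤ q) :
    (C + q) * Real.exp (-(1/(8*ε)) * q) ≤ (C + 16*ε) * Real.exp (-(1/(16*ε)) * q) := by
  set t := Real.exp (-(1/(16*ε)) * q) with htdef
  have ht0 : 0 < t := Real.exp_pos _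
  have ht1 : t ≤ 1 := by
    rw [htdef, Real.exp_le_one_iff, neg_mul]
    simp only [neg_nonpos]
    positivity
  have hu : q / (16*ε) ≤ Real.exp (q/(16*ε)) := by
    have := Real.add_one_le_exp (q/(16*ε))
    linarith
  have h3 : Real.exp (q/(16*ε)) * t = 1 := by
    rw [htdef, ← Real.exp_add]
    have h : q/(16*ε) + (-(1/(16*ε)) * q) = 0 := by ring
    rw [h, Real.exp_zero]
  have h4 : (q/(16*ε)) * t ≤ 1 := h3 ▸ mul_le_mul_of_nonneg_right hu ht0.le
  have hQt : q * t ≤ 16*ε := by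
    have he : q * t = 16*ε * ((q/(16*ε)) * t) := by field_simp
    rw [he]
    calc 16*ε*((q/(16*ε))*t) ≤ 16*ε*1 := mul_le_mul_of_nonneg_left h4 (by positivity)
      _ = 16*ε := mul_one _
  have he8 : Real.exp (-(1/(8*ε)) * q) = t * t := by
    rw [htdef, ← Real.exp_add]
    congr 1
    field_simp
    ring
  rw [he8]
  have hh1 : C * (t*t) ≤ C * t :=
    mul_le_mul_of_nonneg_left (mul_le_of_le_one_left ht0.le ht1) hC
  have hh2 : q * (t*t) ≤ (16*ε) * t := by
    have h5 : q * (t*t) = (q*t)*t := by ring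
    rw [h5]
    exact mul_le_mul_of_nonneg_right hQt ht0.le
  nlinarith [hh1, hh2]

lemma abs_comb_le {s1 s2 sU s3 sφ D qq nn kU kφ pp : ℝ}
    (h1 : |s1| ≤ (nn*D + qq*D)/2) (h2 : s2 ≤ nn*D) (h2' : 0 ≤ s2)
    (hU : |sU| ≤ kU*D) (h3 : |s3| ≤ pp*D) (hφ : |sφ| ≤ kφ*D) (hQd : 0 ≤ qq*D) :
    |-s1 - (1/2)*s2 - sU - s3 - sφ| ≤ (nn + kU + kφ + pp + qq) * D := by
  have a1 := abs_le.1 h1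
  have a3 := abs_le.1 h3
  have aU := abs_le.1 hU
  have aφ := abs_le.1 hφ
  rw [abs_le]
  constructor <;> nlinarith [a1.1, a1.2, a3.1, a3.2, aU.1, aU.2, aφ.1, aφ.2, h2, h2', hQd]

set_option maxHeartbeats 2000000 in
lemma core {n : ℕ} (S : EPSetup n) (hφs : ContDiff ℝ (⊤ : ℕ∞) S.φ)
    (f : (Fin n → ℝ) → ℝ) (hfm : Measurable f) (hfper : IsZPeriodic f)
    (hfint : (∫⁻ u in Set.Icc (0 : Fin n → ℝ) 1, (‖f u‖₊ : ℝ≥0∞)) ≠ ∞) :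
    IsZPeriodic (S.Fop f) ∧ (∃ M : ℝ, 0 ≤ M ∧ ∀ x, |S.Fop f x| ≤ M) ∧
      ∃ K : ℝ≥0, LipschitzWith K (S.Fop f) := by
  classical
  have hε := S.εpos
  set ε := S.ε with hεdef
  obtain ⟨MU, hMU0, hMU⟩ := bounded_of_periodic_continuous S.Usmooth.continuous S.Uper
  obtain ⟨Mφ, hMφ0, hMφ⟩ := bounded_of_periodic_continuous S.φcont S.φper
  obtain ⟨KU, hKU0, hKU⟩ := lipschitz_of_periodic_smooth S.Usmooth S.Uper
  obtain ⟨Kφ, hKφ0, hKφ⟩ := lipschitz_of_periodic_smooth hφs S.φper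
  have hPsq : (0:ℝ) ≤ ∑ i, (S.P i)^2 := Finset.sum_nonneg fun i _ => sq_nonneg _
  have hPabs : (0:ℝ) ≤ ∑ i, |S.P i| := Finset.sum_nonneg fun i _ => abs_nonneg _
  set C0 : ℝ := MU + 2*Mφ + |S.lam| + 2*∑ i, (S.P i)^2 with hC0def
  have hC00 : 0 ≤ C0 := by
    have := abs_nonneg S.lam
    rw [hC0def]; linarith
  set A : ℝ := Real.exp (C0/ε) with hAdef
  have hApos : 0 < A := Real.exp_pos _
  -- pointwise Gaussian bound on the kernel
  have hgamma_le : ∀ x v : Fin n → ℝ, S.gamma x v ≤ A * Real.exp (-(1/(4*ε)) * Q v) := by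
    intro x v
    have hQ0 := Q_nonneg v
    have hPv : -(∑ i, S.P i * v i) ≤ 2*(∑ i, (S.P i)^2) + Q v/8 := by
      have h := Finset.sum_le_sum (fun i (_ : i ∈ Finset.univ) =>
        (by nlinarith [sq_nonneg (4*S.P i + v i)] : -(S.P i * v i) ≤ 2*(S.P i)^2 + (v i)^2/8))
      calc -(∑ i, S.P i * v i) = ∑ i, -(S.P i * v i) := by rw [← Finset.sum_neg_distrib]
        _ ≤ ∑ i, (2*(S.P i)^2 + (v i)^2/8) := h
        _ = 2*(∑ i, (S.P i)^2) + Q v/8 := by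
            rw [Finset.sum_add_distrib, ← Finset.mul_sum, ← Finset.sum_div, Q]
    have hLagv : Lag S.U S.P x v = (1/2)*Q v - S.U x + ∑ i, S.P i * v i := rfl
    have ha : Q v/4 - C0 ≤ Lag S.U S.P x v + S.φ (x + v) - S.φ x - S.lam := by
      have hUb := abs_le.1 (hMU x)
      have hφ1 := abs_le.1 (hMφ (x+v))
      have hφ2 := abs_le.1 (hMφ x)
      have hlam := neg_abs_le S.lam
      have hlam2 := le_abs_self S.lam
      rw [hLagv, hC0def]
      linarith
    have hdiv : -(Lag S.U S.P x v + S.φ (x + v) - S.φ x - S.lam)/ε ≤ (C0 - Q v/4)/ε := by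
      gcongr
      linarith
    calc S.gamma x v = Real.exp (-(Lag S.U S.P x v + S.φ (x + v) - S.φ x - S.lam)/ε) := rfl
      _ ≤ Real.exp ((C0 - Q v/4)/ε) := Real.exp_le_exp.2 hdiv
      _ = A * Real.exp (-(1/(4*ε)) * Q v) := by
          rw [hAdef, ← Real.exp_add]
          congr 1
          field_simp
          ring
  -- Lipschitz-in-x bound on the kernel
  set C1c : ℝ := n + KU + Kφ + ∑ i, |S.P i| with hC1cdef
  have hC1c0 : 0 ≤ C1c := by
    rw [hC1cdef]
    have : (0:ℝ) ≤ (n:ℝ) := Nat.cast_nonneg n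
    linarith
  set A1 : ℝ := A * Real.exp ((n:ℝ)/(4*ε)) with hA1def
  have hA1pos : 0 < A1 := mul_pos hApos (Real.exp_pos _)
  set A2 : ℝ := A1 * (C1c + 16*ε) / ε with hA2def
  have hA2pos : 0 < A2 := by
    rw [hA2def]
    have : 0 < C1c + 16*ε := by linarith
    positivity
  have hdiff_le : ∀ x x' v : Fin n → ℝ, ‖x - x'‖ ≤ 1 →
      |S.gamma x v - S.gamma x' (v + (x - x'))| ≤
        A2 * Real.exp (-(1/(16*ε)) * Q v) * ‖x - x'‖ := by
    intro x x' v hd1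
    set d := x - x' with hdd
    have hQ0 := Q_nonneg v
    have hd0 : (0:ℝ) ≤ ‖d‖ := norm_nonneg d
    have hdi : ∀ i, |d i| ≤ ‖d‖ := fun i => by
      calc |d i| = ‖d i‖ := (Real.norm_eq_abs _).symm
        _ ≤ ‖d‖ := norm_le_pi_norm d i
    set a : ℝ := Lag S.U S.P x v + S.φ (x + v) - S.φ x - S.lam with hadef
    set b : ℝ := Lag S.U S.P x' (v + d) + S.φ (x' + (v + d)) - S.φ x' - S.lam with hbdef
    have hga : S.gamma x v = Real.exp (-a/ε) := rfl
    have hgb : S.gamma x' (v + d) = Real.exp (-b/ε) := rfl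
    have hxv : x' + (v + d) = x + v := by rw [hdd]; ring
    have hLag : Lag S.U S.P x' (v + d) = Lag S.U S.P x v + (∑ i, v i * d i)
        + (1/2)*(∑ i, (d i)^2) + (S.U x - S.U x') + ∑ i, S.P i * d i := by
      simp only [Lag, Pi.add_apply]
      have e1 : ∑ i, (v i + d i)^2 = ∑ i, (v i)^2 + ((2*∑ i, v i * d i) + ∑ i, (d i)^2) := by
        rw [Finset.mul_sum, ← Finset.sum_add_distrib, ← Finset.sum_add_distrib]
        exact Finset.sum_congr rfl fun i _ => by ring
      have e2 : ∑ i, S.P i * (v i + d i) = ∑ i, S.P i * v i + ∑ i, S.P i * d i := by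
        rw [← Finset.sum_add_distrib]
        exact Finset.sum_congr rfl fun i _ => by ring
      rw [e1, e2]
      ring
    have hab : a - b = -(∑ i, v i * d i) - (1/2)*(∑ i, (d i)^2) - (S.U x - S.U x')
        - (∑ i, S.P i * d i) - (S.φ x - S.φ x') := by
      rw [hadef, hbdef, hxv, hLag]
      ring
    have t1 : |∑ i, v i * d i| ≤ ((n:ℝ)*‖d‖ + Q v*‖d‖)/2 := by
      calc |∑ i, v i * d i| ≤ ∑ i, |v i * d i| := Finset.abs_sum_le_sum_abs _ _
        _ ≤ ∑ i, ((1 + (v i)^2)/2 * ‖d‖) := Finset.sum_le_sum fun i _ => by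
            rw [abs_mul]
            have h1 : |v i| ≤ (1 + (v i)^2)/2 := by
              nlinarith [sq_nonneg (|v i| - 1), sq_abs (v i)]
            exact mul_le_mul h1 (hdi i) (abs_nonneg _) (by positivity)
        _ = ((n:ℝ)*‖d‖ + Q v*‖d‖)/2 := by
            rw [← Finset.sum_mul]
            have e : ∑ i, (1 + (v i)^2)/2 = ((n:ℝ) + Q v)/2 := by
              rw [← Finset.sum_div, Finset.sum_add_distrib, Finset.sum_const,
                Finset.card_univ, Fintype.card_fin, Q, nsmul_eq_mul, mul_one]
            rw [e]
            ring
    have t2 : ∑ i, (d i)^2 ≤ (n:ℝ) * ‖d‖ := by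
      have hsq : ∀ i, (d i)^2 ≤ ‖d‖ * ‖d‖ := fun i => by
        rw [pow_two, ← abs_mul_abs_self]
        exact mul_self_le_mul_self (abs_nonneg _) (hdi i)
      calc ∑ i, (d i)^2 ≤ ∑ _i : Fin n, ‖d‖ * ‖d‖ := Finset.sum_le_sum fun i _ => hsq i
        _ = (n:ℝ) * (‖d‖*‖d‖) := by
            rw [Finset.sum_const, Finset.card_univ, Fintype.card_fin, nsmul_eq_mul]
        _ ≤ (n:ℝ) * ‖d‖ := by
            exact mul_le_mul_of_nonneg_left (mul_le_of_le_one_left hd0 hd1) (Nat.cast_nonneg n)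
    have t2' : (0:ℝ) ≤ ∑ i, (d i)^2 := Finset.sum_nonneg fun i _ => sq_nonneg _
    have t3 : |∑ i, S.P i * d i| ≤ (∑ i, |S.P i|) * ‖d‖ := by
      calc |∑ i, S.P i * d i| ≤ ∑ i, |S.P i * d i| := Finset.abs_sum_le_sum_abs _ _
        _ ≤ ∑ i, |S.P i| * ‖d‖ := Finset.sum_le_sum fun i _ => by
            rw [abs_mul]
            exact mul_le_mul_of_nonneg_left (hdi i) (abs_nonneg _)
        _ = (∑ i, |S.P i|) * ‖d‖ := (Finset.sum_mul _ _ _).symm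
    have tU : |S.U x - S.U x'| ≤ KU * ‖d‖ := hKU x x'
    have tφ : |S.φ x - S.φ x'| ≤ Kφ * ‖d‖ := hKφ x x'
    have habs : |a - b| ≤ (C1c + Q v) * ‖d‖ := by
      have hQd : 0 ≤ Q v * ‖d‖ := mul_nonneg hQ0 hd0
      have hcomb := abs_comb_le (D := ‖d‖) t1 t2 t2' tU t3 tφ hQd
      rw [hab, hC1cdef]
      have hre : ((n:ℝ) + KU + Kφ + (∑ i, |S.P i|) + Q v) * ‖d‖ =
          ((n:ℝ) + KU + Kφ + (∑ i, |S.P i|)  + Q v) * ‖d‖ := rfl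
      calc |-(∑ i, v i * d i) - (1/2)*(∑ i, (d i)^2) - (S.U x - S.U x')
          - (∑ i, S.P i * d i) - (S.φ x - S.φ x')|
          ≤ ((n:ℝ) + KU + Kφ + (∑ i, |S.P i|) + Q v) * ‖d‖ := hcomb
        _ = ((n:ℝ) + KU + Kφ + (∑ i, |S.P i|) + Q v) * ‖d‖ := rfl
    have hQvd : Q v / 2 - (n:ℝ) ≤ Q (v + d) := by
      have hterm : ∀ i, (v i)^2/2 - (d i)^2 ≤ (v i + d i)^2 := fun i => by
        nlinarith [sq_nonneg (v i + 2*d i)]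
      have hsum := Finset.sum_le_sum fun i (_ : i ∈ Finset.univ) => hterm i
      have e : ∑ i, ((v i)^2/2 - (d i)^2) = Q v/2 - ∑ i, (d i)^2 := by
        rw [Finset.sum_sub_distrib, ← Finset.sum_div, Q]
      have hd2n : ∑ i, (d i)^2 ≤ (n:ℝ) := by
        have h6 : (n:ℝ) * ‖d‖ ≤ (n:ℝ) := mul_le_of_le_one_right (Nat.cast_nonneg n) hd1
        linarith [t2]
      calc Q v/2 - (n:ℝ) ≤ Q v/2 - ∑ i, (d i)^2 := by linarith
        _ = ∑ i, ((v i)^2/2 - (d i)^2) := e.symm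
        _ ≤ ∑ i, (v i + d i)^2 := hsum
        _ = Q (v + d) := by simp [Q]
    have hmax1 : S.gamma x v ≤ A1 * Real.exp (-(1/(8*ε)) * Q v) := by
      have h1 : Real.exp (-(1/(4*ε)) * Q v) ≤ Real.exp (-(1/(8*ε)) * Q v) := by
        apply Real.exp_le_exp.2
        rw [neg_mul, neg_mul, neg_le_neg_iff]
        apply mul_le_mul_of_nonneg_right _ hQ0
        rw [div_le_div_iff₀ (by positivity) (by positivity)]
        nlinarith
      have h2 : (1:ℝ) ≤ Real.exp ((n:ℝ)/(4*ε)) := Real.one_le_exp (by positivity)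
      calc S.gamma x v ≤ A * Real.exp (-(1/(4*ε)) * Q v) := hgamma_le x v
        _ ≤ A * Real.exp (-(1/(8*ε)) * Q v) := mul_le_mul_of_nonneg_left h1 hApos.le
        _ ≤ A1 * Real.exp (-(1/(8*ε)) * Q v) := by
            rw [hA1def]
            have he := (Real.exp_pos (-(1/(8*ε)) * Q v)).le
            have hA' : A ≤ A * Real.exp ((n:ℝ)/(4*ε)) := by
              calc A = A * 1 := (mul_one A).symm
                _ ≤ A * Real.exp ((n:ℝ)/(4*ε)) := mul_le_mul_of_nonneg_left h2 hApos.le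
            exact mul_le_mul_of_nonneg_right hA' he
    have hmax2 : S.gamma x' (v + d) ≤ A1 * Real.exp (-(1/(8*ε)) * Q v) := by
      calc S.gamma x' (v+d) ≤ A * Real.exp (-(1/(4*ε)) * Q (v+d)) := hgamma_le x' (v+d)
        _ ≤ A * (Real.exp ((n:ℝ)/(4*ε)) * Real.exp (-(1/(8*ε)) * Q v)) := by
            apply mul_le_mul_of_nonneg_left _ hApos.le
            rw [← Real.exp_add]
            apply Real.exp_le_exp.2
            have h1 : -(1/(4*ε)) * Q (v+d) ≤ -(1/(4*ε)) * (Q v/2 - (n:ℝ)) :=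
              mul_le_mul_of_nonpos_left hQvd (neg_nonpos.2 (by positivity : (0:ℝ) ≤ 1/(4*ε)))
            calc -(1/(4*ε)) * Q (v+d) ≤ -(1/(4*ε)) * (Q v/2 - (n:ℝ)) := h1
              _ = (n:ℝ)/(4*ε) + (-(1/(8*ε)) * Q v) := by
                  field_simp
                  ring
        _ = A1 * Real.exp (-(1/(8*ε)) * Q v) := by rw [hA1def]; ring
    have hstep := abs_exp_sub_exp_le (-a/ε) (-b/ε)
    rw [← hga, ← hgb] at hstep
    have hmax : max (S.gamma x v) (S.gamma x' (v+d)) ≤ A1 * Real.exp (-(1/(8*ε)) * Q v) :=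
      max_le hmax1 hmax2
    have harg : |(-a/ε) - (-b/ε)| = |a - b|/ε := by
      rw [div_sub_div_same, abs_div, abs_of_pos hε, abs_sub_comm]
      ring_nf
    have hkey : (C1c + Q v) * Real.exp (-(1/(8*ε)) * Q v) ≤
        (C1c + 16*ε) * Real.exp (-(1/(16*ε)) * Q v) := key_decay hC1c0 hε hQ0
    calc |S.gamma x v - S.gamma x' (v + d)|
        ≤ |(-a/ε) - (-b/ε)| * max (S.gamma x v) (S.gamma x' (v+d)) := hstep
      _ ≤ (|a - b|/ε) * (A1 * Real.exp (-(1/(8*ε)) * Q v)) := by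
          rw [harg]
          exact mul_le_mul_of_nonneg_left hmax (by positivity)
      _ ≤ (((C1c + Q v) * ‖d‖)/ε) * (A1 * Real.exp (-(1/(8*ε)) * Q v)) := by
          apply mul_le_mul_of_nonneg_right _ (by positivity)
          gcongr
      _ = (A1/ε) * ((C1c + Q v) * Real.exp (-(1/(8*ε)) * Q v)) * ‖d‖ := by ring
      _ ≤ (A1/ε) * ((C1c + 16*ε) * Real.exp (-(1/(16*ε)) * Q v)) * ‖d‖ := by
          apply mul_le_mul_of_nonneg_right _ hd0
          exact mul_le_mul_of_nonneg_left hkey (by positivity)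
      _ = A2 * Real.exp (-(1/(16*ε)) * Q v) * ‖d‖ := by rw [hA2def]; ring
  -- measurability and periodicity of the norm of f
  set G : (Fin n → ℝ) → ℝ≥0∞ := fun u => (‖f u‖₊ : ℝ≥0∞) with hGdef
  have hGm : Measurable G := hfm.nnnorm.coe_nnreal_ennreal
  have hGper : ∀ (x : Fin n → ℝ) (k : Fin n → ℤ), G (x + ivec k) = G x := by
    intro x k
    have h7 := hfper x k
    simp only [hGdef, ivec]
    exact congrArg (fun r : ℝ => ((‖r‖₊ : ℝ≥0∞))) h7
  obtain ⟨CB4, hCB4ne, hCB4⟩ := gauss_cell_bound (n := n) (show (0:ℝ) < 1/(4*ε) by positivity)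
  obtain ⟨CB16, hCB16ne, hCB16⟩ := gauss_cell_bound (n := n) (show (0:ℝ) < 1/(16*ε) by positivity)
  set I : ℝ≥0∞ := ∫⁻ u in Set.Icc (0 : Fin n → ℝ) 1, G u with hIdef
  have hIne : I ≠ ∞ := hfint
  -- continuity of the kernel in v
  have hgamma_cont : ∀ x : Fin n → ℝ, Continuous fun v => S.gamma x v := by
    intro x
    have hPc : Continuous fun v : Fin n → ℝ => ∑ i, S.P i * v i :=
      continuous_finset_sum _ fun i _ => continuous_const.mul (continuous_apply i)
    have hLc : Continuous fun v => Lag S.U S.P x v := by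
      simp only [Lag]
      exact ((continuous_const.mul (continuous_finset_sum _ fun i _ =>
        (continuous_apply i).pow 2)).sub continuous_const).add hPc
    have hc : Continuous fun v => -(Lag S.U S.P x v + S.φ (x + v) - S.φ x - S.lam)/S.ε :=
      (((hLc.add (S.φcont.comp (continuous_const.add continuous_id))).sub
        continuous_const).sub continuous_const).neg.div_const _
    exact Real.continuous_exp.comp hc
  have hgamma_pos : ∀ x v : Fin n → ℝ, 0 < S.gamma x v := fun x v => Real.exp_pos _
  have hnorm_eq : ∀ (x v : Fin n → ℝ) (r : ℝ),
      ENNReal.ofReal ‖r * f (x + v)‖ = ENNReal.ofReal |r| * G (x + v) := by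
    intro x v r
    rw [Real.norm_eq_abs, abs_mul, ENNReal.ofReal_mul (abs_nonneg _)]
    congr 1
    exact (Real.enorm_eq_ofReal_abs _).symm
  have hbnd4 : ∀ x : Fin n → ℝ,
      (∫⁻ v, ENNReal.ofReal ‖S.gamma x v * f (x + v)‖) ≤ ENNReal.ofReal A * (CB4 * I) := by
    intro x
    have hptw : ∀ v, ENNReal.ofReal ‖S.gamma x v * f (x + v)‖ ≤
        ENNReal.ofReal A * (ENNReal.ofReal (Real.exp (-(1/(4*ε)) * Q v)) * G (x + v)) := by
      intro v
      rw [hnorm_eq x v _, abs_of_pos (hgamma_pos x v), ← mul_assoc,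
        ← ENNReal.ofReal_mul hApos.le]
      exact mul_le_mul_left (ENNReal.ofReal_le_ofReal (hgamma_le x v)) _
    calc (∫⁻ v, ENNReal.ofReal ‖S.gamma x v * f (x + v)‖)
        ≤ ∫⁻ v, ENNReal.ofReal A *
            (ENNReal.ofReal (Real.exp (-(1/(4*ε)) * Q v)) * G (x + v)) := lintegral_mono hptw
      _ = ENNReal.ofReal A * ∫⁻ v, ENNReal.ofReal (Real.exp (-(1/(4*ε)) * Q v)) * G (x + v) :=
          lintegral_const_mul _ ((measurable_gaussQ _).mul
            (hGm.comp (measurable_const.add measurable_id)))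
      _ ≤ ENNReal.ofReal A * (CB4 * I) := mul_le_mul_right (hCB4 G hGm hGper x) _
  have hfin4 : ENNReal.ofReal A * (CB4 * I) ≠ ∞ :=
    ENNReal.mul_ne_top ENNReal.ofReal_ne_top (ENNReal.mul_ne_top hCB4ne hIne)
  have hInt : ∀ x : Fin n → ℝ, Integrable (fun v => S.gamma x v * f (x + v)) := by
    intro x
    refine ⟨((hgamma_cont x).aestronglyMeasurable.mul
      ((hfm.comp (measurable_const.add measurable_id)).aestronglyMeasurable)), ?_⟩
    rw [hasFiniteIntegral_iff_norm]
    exact lt_of_le_of_lt (hbnd4 x) (lt_top_iff_ne_top.2 hfin4)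
  -- periodicity of `Fop f`
  have hFper : IsZPeriodic (S.Fop f) := by
    intro x k
    have key : ∀ v : Fin n → ℝ,
        S.gamma (x + fun i => ((k i : ℝ))) v * f ((x + fun i => ((k i : ℝ))) + v)
          = S.gamma x v * f (x + v) := by
      intro v
      have hc : (x + fun i => ((k i : ℝ))) + v = (x + v) + fun i => ((k i : ℝ)) :=
        add_right_comm _ _ _
      have hg : S.gamma (x + fun i => ((k i : ℝ))) v = S.gamma x v := by
        simp only [EPSetup.gamma, Lag]
        rw [hc, S.φper (x + v) k, S.φper x k, S.Uper x k]
      rw [hg, hc, hfper (x + v) k]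
    simp only [EPSetup.Fop]
    exact congrArg (integral volume) (funext key)
  -- uniform bound on `Fop f`
  set M : ℝ := (ENNReal.ofReal A * (CB4 * I)).toReal with hMdef
  have hM0 : 0 ≤ M := ENNReal.toReal_nonneg
  have hMbd : ∀ x, |S.Fop f x| ≤ M := by
    intro x
    calc |S.Fop f x| = ‖∫ v, S.gamma x v * f (x + v)‖ := by rw [Real.norm_eq_abs]; rfl
      _ ≤ (∫⁻ v, ENNReal.ofReal ‖S.gamma x v * f (x + v)‖).toReal :=
          norm_integral_le_lintegral_norm _
      _ ≤ M := ENNReal.toReal_mono hfin4 (hbnd4 x)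
  -- local Lipschitz bound on `Fop f`
  set K0 : ℝ := A2 * (CB16 * I).toReal with hK0def
  have hK00 : 0 ≤ K0 := mul_nonneg hA2pos.le ENNReal.toReal_nonneg
  have hfin16 : CB16 * I ≠ ∞ := ENNReal.mul_ne_top hCB16ne hIne
  have hlip1 : ∀ x x' : Fin n → ℝ, ‖x - x'‖ ≤ 1 →
      |S.Fop f x - S.Fop f x'| ≤ K0 * ‖x - x'‖ := by
    intro x x' hle
    set d := x - x' with hdd
    have hxw : ∀ w : Fin n → ℝ, x' + (w + d) = x + w := fun w => by rw [hdd]; ring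
    have h1fun : (fun w => S.gamma x' (w + d) * f (x' + (w + d)))
        = fun w => S.gamma x' (w + d) * f (x + w) := funext fun w => by rw [hxw w]
    have htr : S.Fop f x' = ∫ w, S.gamma x' (w + d) * f (x + w) := by
      have h0 : (∫ v, S.gamma x' v * f (x' + v)) =
          ∫ w, S.gamma x' (w + d) * f (x' + (w + d)) :=
        (integral_add_right_eq_self (μ := volume) (fun v => S.gamma x' v * f (x' + v)) d).symm
      show (∫ v, S.gamma x' v * f (x' + v)) = _
      rw [h0, h1fun]
    have hInt2 : Integrable (fun w => S.gamma x' (w + d) * f (x + w)) := by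
      have h2 := (hInt x').comp_add_right d
      rwa [h1fun] at h2
    have hdiffeq : S.Fop f x - S.Fop f x' =
        ∫ w, (S.gamma x w - S.gamma x' (w + d)) * f (x + w) := by
      have h3 : S.Fop f x = ∫ w, S.gamma x w * f (x + w) := rfl
      rw [h3, htr, ← integral_sub (hInt x) hInt2]
      congr 1
      funext w
      ring
    have hbnd16 : (∫⁻ w, ENNReal.ofReal ‖(S.gamma x w - S.gamma x' (w + d)) * f (x + w)‖)
        ≤ ENNReal.ofReal (A2 * ‖d‖) * (CB16 * I) := by
      have hptw : ∀ w, ENNReal.ofReal ‖(S.gamma x w - S.gamma x' (w + d)) * f (x + w)‖ ≤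
          ENNReal.ofReal (A2 * ‖d‖) *
            (ENNReal.ofReal (Real.exp (-(1/(16*ε)) * Q w)) * G (x + w)) := by
        intro w
        rw [hnorm_eq x w _]
        have h1 : |S.gamma x w - S.gamma x' (w + d)| ≤
            (A2 * ‖d‖) * Real.exp (-(1/(16*ε)) * Q w) := by
          calc |S.gamma x w - S.gamma x' (w + d)| ≤
              A2 * Real.exp (-(1/(16*ε)) * Q w) * ‖d‖ := hdiff_le x x' w hle
            _ = (A2 * ‖d‖) * Real.exp (-(1/(16*ε)) * Q w) := by ring
        rw [← mul_assoc, ← ENNReal.ofReal_mul (by positivity)]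
        exact mul_le_mul_left (ENNReal.ofReal_le_ofReal h1) _
      calc (∫⁻ w, ENNReal.ofReal ‖(S.gamma x w - S.gamma x' (w + d)) * f (x + w)‖)
          ≤ ∫⁻ w, ENNReal.ofReal (A2 * ‖d‖) *
              (ENNReal.ofReal (Real.exp (-(1/(16*ε)) * Q w)) * G (x + w)) :=
            lintegral_mono hptw
        _ = ENNReal.ofReal (A2 * ‖d‖) *
              ∫⁻ w, ENNReal.ofReal (Real.exp (-(1/(16*ε)) * Q w)) * G (x + w) :=
            lintegral_const_mul _ ((measurable_gaussQ _).mul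
              (hGm.comp (measurable_const.add measurable_id)))
        _ ≤ ENNReal.ofReal (A2 * ‖d‖) * (CB16 * I) :=
            mul_le_mul_right (hCB16 G hGm hGper x) _
    calc |S.Fop f x - S.Fop f x'|
        = ‖∫ w, (S.gamma x w - S.gamma x' (w + d)) * f (x + w)‖ := by
          rw [hdiffeq, Real.norm_eq_abs]
      _ ≤ (∫⁻ w, ENNReal.ofReal ‖(S.gamma x w - S.gamma x' (w + d)) * f (x + w)‖).toReal :=
          norm_integral_le_lintegral_norm _
      _ ≤ (ENNReal.ofReal (A2 * ‖d‖) * (CB16 * I)).toReal :=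
          ENNReal.toReal_mono (ENNReal.mul_ne_top ENNReal.ofReal_ne_top hfin16) hbnd16
      _ = K0 * ‖d‖ := by
          rw [ENNReal.toReal_mul, ENNReal.toReal_ofReal (by positivity), hK0def]
          ring
  refine ⟨hFper, ⟨M, hM0, hMbd⟩, ⟨Real.toNNReal (max K0 (2*M)), ?_⟩⟩
  rw [lipschitzWith_iff_dist_le_mul]
  intro x y
  rw [Real.dist_eq, dist_eq_norm]
  rw [Real.coe_toNNReal _ (le_trans hK00 (le_max_left _ _))]
  rcases le_or_gt ‖x - y‖ 1 with hc | hc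
  · calc |S.Fop f x - S.Fop f y| ≤ K0 * ‖x - y‖ := hlip1 x y hc
      _ ≤ max K0 (2*M) * ‖x - y‖ :=
        mul_le_mul_of_nonneg_right (le_max_left _ _) (norm_nonneg _)
  · have h1 : |S.Fop f x - S.Fop f y| ≤ 2*M := by
      rw [abs_sub_le_iff]
      constructor <;> linarith [abs_le.1 (hMbd x), abs_le.1 (hMbd y)]
    calc |S.Fop f x - S.Fop f y| ≤ 2*M := h1
      _ ≤ (2*M) * ‖x - y‖ := le_mul_of_one_le_right (by linarith) hc.le
      _ ≤ max K0 (2*M) * ‖x - y‖ :=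
        mul_le_mul_of_nonneg_right (le_max_right _ _) (norm_nonneg _)


end EPAux

/-- If `j > n/2` then for every `g ∈ L²(θ)` the iterate `F^j(g)` agrees
almost everywhere with a Hölder continuous `ℤⁿ`-periodic function. -/
theorem Fop_iterate_holder {n : ℕ} (hn : 1 ≤ n) (S : EPSetup n)
    (hφsmooth : ContDiff ℝ (⊤ : ℕ∞) S.φ)
    (j : ℕ) (hj : (n : ℝ) / 2 < j)
    (g : (Fin n → ℝ) → ℝ) (hgper : IsZPeriodic g) (hgL2 : MemLp g 2 S.μθ) :
    ∃ h : (Fin n → ℝ) → ℝ, IsZPeriodic h ∧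
      (∃ (C α : ℝ≥0), 0 < α ∧ HolderWith C α h) ∧
      S.Fop^[j] g =ᵐ[volume] h := by
  classical
  open EPAux in
  have hε := S.εpos
  -- j is positive
  have hj0 : 0 < j := by
    rcases Nat.eq_zero_or_pos j with h | h
    · rw [h] at hj
      norm_num at hj
      have h0 : (0:ℝ) ≤ (n:ℝ)/2 := by positivity
      linarith
    · exact h
  -- bounds on θ
  obtain ⟨Mφ, hMφ0, hMφ⟩ := EPAux.bounded_of_periodic_continuous S.φcont S.φper
  obtain ⟨Mφb, hMφb0, hMφb⟩ := EPAux.bounded_of_periodic_continuous S.φbarcont S.φbarper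
  set θmin : ℝ := Real.exp (-(Mφ + Mφb)/S.ε) with hθmindef
  have hθminpos : 0 < θmin := Real.exp_pos _
  have hθlb : ∀ x, θmin ≤ S.θ x := by
    intro x
    apply Real.exp_le_exp.2
    have h1 := abs_le.1 (hMφ x)
    have h2 := abs_le.1 (hMφb x)
    gcongr <;> linarith
  have hθub : ∀ x, S.θ x ≤ Real.exp ((Mφ + Mφb)/S.ε) := by
    intro x
    apply Real.exp_le_exp.2
    have h1 := abs_le.1 (hMφ x)
    have h2 := abs_le.1 (hMφb x)
    have h3 : -(S.φ x + S.φbar x) ≤ Mφ + Mφb := by linarith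
    gcongr <;> linarith
  have hθmeas : Measurable fun x => ENNReal.ofReal (S.θ x) := by
    have : Continuous (S.θ) :=
      Real.continuous_exp.comp (((S.φcont.add S.φbarcont).neg).div_const _)
    exact this.measurable.ennreal_ofReal
  -- a measurable representative of g on the torus
  set g₁ : (Fin n → ℝ) → ℝ := hgL2.1.mk g with hg₁def
  have hg₁m : Measurable g₁ := hgL2.1.stronglyMeasurable_mk.measurable
  have heq : g =ᵐ[S.μθ] g₁ := hgL2.1.ae_eq_mk
  -- the restricted Lebesgue measure is absolutely continuous wrt μθ
  set μI := volume.restrict (Set.Icc (0 : Fin n → ℝ) 1) with hμIdef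
  have hac : μI ≪ S.μθ := by
    have h1 : (S.μθ).withDensity (fun x => (ENNReal.ofReal (S.θ x))⁻¹) = μI := by
      rw [EPSetup.μθ, ← withDensity_mul _ (g := fun x => (ENNReal.ofReal (S.θ x))⁻¹) hθmeas hθmeas.inv]
      have h2 : ((fun x => ENNReal.ofReal (S.θ x)) * fun x => (ENNReal.ofReal (S.θ x))⁻¹) =
          (1 : (Fin n → ℝ) → ℝ≥0∞) := by
        funext x
        show ENNReal.ofReal (S.θ x) * (ENNReal.ofReal (S.θ x))⁻¹ = 1
        exact ENNReal.mul_inv_cancel (ENNReal.ofReal_pos.2 (Real.exp_pos _)).ne'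
          ENNReal.ofReal_ne_top
      rw [h2, withDensity_one]
    rw [← h1]
    exact withDensity_absolutelyContinuous _ _
  have haeI : g =ᵐ[μI] g₁ := heq.filter_mono hac.ae_le
  -- periodic measurable extension g₀
  set g₀ : (Fin n → ℝ) → ℝ := fun x => g₁ (EPAux.fractv x) with hg₀def
  have hg₀m : Measurable g₀ := hg₁m.comp EPAux.measurable_fractv
  have hg₀per : IsZPeriodic g₀ := by
    intro x k
    show g₁ (EPAux.fractv (x + fun i => ((k i : ℝ)))) = g₁ (EPAux.fractv x)
    congr 1
    funext i
    show Int.fract (x i + ((k i : ℝ))) = Int.fract (x i)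
    exact Int.fract_add_intCast _ _
  -- the half-open cube
  set IcoP : Set (Fin n → ℝ) := Set.pi Set.univ (fun _ => Set.Ico (0:ℝ) 1) with hIcoPdef
  have hIcoPmeas : MeasurableSet IcoP := MeasurableSet.univ_pi fun _ => measurableSet_Ico
  have hIcoPsub : IcoP ⊆ Set.Icc (0 : Fin n → ℝ) 1 := by
    intro x hx
    rw [Set.mem_Icc]
    constructor <;> intro i
    · exact (hx i (Set.mem_univ i)).1
    · exact (hx i (Set.mem_univ i)).2.le
  have hg₀Ico : ∀ x ∈ IcoP, g₀ x = g₁ x := by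
    intro x hx
    show g₁ (EPAux.fractv x) = g₁ x
    congr 1
    funext i
    exact Int.fract_eq_self.2 ⟨(hx i (Set.mem_univ i)).1, (hx i (Set.mem_univ i)).2⟩
  -- g agrees with g₀ almost everywhere on the half-open cube
  have haeIco : g =ᵐ[volume.restrict IcoP] g₀ := by
    have h1 : volume.restrict IcoP ≤ μI := by
      rw [hμIdef]
      exact Measure.restrict_mono hIcoPsub le_rfl
    have h2 : g =ᵐ[volume.restrict IcoP] g₁ :=
      haeI.filter_mono (Measure.absolutelyContinuous_of_le h1).ae_le
    have h3 : ∀ᵐ x ∂(volume.restrict IcoP), x ∈ IcoP := ae_restrict_mem hIcoPmeas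
    filter_upwards [h2, h3] with x hx1 hx2
    rw [hx1, ← hg₀Ico x hx2]
  -- the set where g and g₀ differ is null
  set N : Set (Fin n → ℝ) := {y | g y ≠ g₀ y} with hNdef
  have hNIco : volume (N ∩ IcoP) = 0 := by
    have h1 : (volume.restrict IcoP) N = 0 := by
      rw [hNdef]
      exact ae_iff.1 haeIco
    rwa [Measure.restrict_apply' hIcoPmeas] at h1
  have hN0 : volume N = 0 := by
    have hNsub : N ⊆ ⋃ k : Fin n → ℤ, (fun z => EPAux.ivec k + z) '' (N ∩ IcoP) := by
      intro x hx
      have hy : EPAux.fractv x ∈ IcoP := by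
        intro i _
        exact ⟨Int.fract_nonneg _, Int.fract_lt_one _⟩
      have hgy : g x = g (EPAux.fractv x) := EPAux.periodic_eq_fractv hgper x
      have hg₀y : g₀ x = g₀ (EPAux.fractv x) := EPAux.periodic_eq_fractv hg₀per x
      have hyN : EPAux.fractv x ∈ N := by
        rw [hNdef] at hx ⊢
        intro hcon
        exact hx (by rw [hgy, hg₀y, hcon])
      refine Set.mem_iUnion.2 ⟨EPAux.floorv x, ⟨EPAux.fractv x, ⟨hyN, hy⟩, ?_⟩⟩
      have := EPAux.fractv_add_ivec_floorv x
      rw [add_comm] at this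
      exact this.symm
    have hterm : ∀ k : Fin n → ℤ, volume ((fun z => EPAux.ivec k + z) '' (N ∩ IcoP)) = 0 :=
      fun k => EPAux.null_translate hNIco (EPAux.ivec k)
    have hle2 := measure_iUnion_le (μ := (volume : Measure (Fin n → ℝ)))
      (fun k : Fin n → ℤ => (fun z => EPAux.ivec k + z) '' (N ∩ IcoP))
    have hle := (measure_mono (μ := (volume : Measure (Fin n → ℝ))) hNsub).trans hle2
    simp only [hterm, tsum_zero] at hle
    exact le_antisymm hle zero_le
  -- Fop applied to g and to g₀ agree everywhere
  have hFopeq : S.Fop g = S.Fop g₀ := by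
    funext x
    apply integral_congr_ae
    have hnull : volume ((fun v => x + v) ⁻¹' N) = 0 := EPAux.null_preimage_add hN0 x
    have : ∀ᵐ v : Fin n → ℝ, g (x + v) = g₀ (x + v) := by
      rw [MeasureTheory.ae_iff]
      exact measure_mono_null (fun v hv => hv) hnull
    filter_upwards [this] with v hv
    rw [hv]
  -- the cell integral of g₁ is finite
  have hfinμ : IsFiniteMeasure S.μθ := by
    constructor
    rw [EPSetup.μθ, withDensity_apply _ MeasurableSet.univ, Measure.restrict_restrict MeasurableSet.univ]
    rw [Set.univ_inter]
    calc ∫⁻ x in Set.Icc (0 : Fin n → ℝ) 1, ENNReal.ofReal (S.θ x)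
        ≤ ∫⁻ _x in Set.Icc (0 : Fin n → ℝ) 1, ENNReal.ofReal (Real.exp ((Mφ + Mφb)/S.ε)) :=
          setLIntegral_mono measurable_const fun x _ => ENNReal.ofReal_le_ofReal (hθub x)
      _ = ENNReal.ofReal (Real.exp ((Mφ + Mφb)/S.ε)) * volume (Set.Icc (0 : Fin n → ℝ) 1) :=
          setLIntegral_const _ _
      _ < ∞ := ENNReal.mul_lt_top ENNReal.ofReal_lt_top
          (isCompact_Icc.measure_lt_top)
  have hg₁L2 : MemLp g₁ 2 S.μθ := hgL2.ae_eq heq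
  have hg₁int : Integrable g₁ S.μθ := hg₁L2.integrable one_le_two
  have hInt1 : (∫⁻ u in Set.Icc (0 : Fin n → ℝ) 1, (‖g₁ u‖₊ : ℝ≥0∞)) ≠ ∞ := by
    have h1 : (∫⁻ u, (‖g₁ u‖₊ : ℝ≥0∞) ∂S.μθ) < ∞ := hg₁int.2
    have h2 : (∫⁻ u, (‖g₁ u‖₊ : ℝ≥0∞) ∂S.μθ) =
        ∫⁻ u in Set.Icc (0 : Fin n → ℝ) 1, ENNReal.ofReal (S.θ u) * (‖g₁ u‖₊ : ℝ≥0∞) := by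
      rw [EPSetup.μθ, lintegral_withDensity_eq_lintegral_mul _ hθmeas hg₁m.nnnorm.coe_nnreal_ennreal]
      rfl
    have h3 : ENNReal.ofReal θmin * (∫⁻ u in Set.Icc (0 : Fin n → ℝ) 1, (‖g₁ u‖₊ : ℝ≥0∞)) ≤
        ∫⁻ u in Set.Icc (0 : Fin n → ℝ) 1, ENNReal.ofReal (S.θ u) * (‖g₁ u‖₊ : ℝ≥0∞) := by
      rw [← lintegral_const_mul _ hg₁m.nnnorm.coe_nnreal_ennreal]
      exact lintegral_mono fun u =>
        mul_le_mul_left (ENNReal.ofReal_le_ofReal (hθlb u)) _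
    have ha0 : ENNReal.ofReal θmin ≠ 0 := (ENNReal.ofReal_pos.2 hθminpos).ne'
    intro hb
    rw [hb, ENNReal.mul_top ha0] at h3
    rw [← h2] at h3
    exact (lt_irrefl _ (lt_of_le_of_lt h3 h1)).elim
  -- the cell integral of g₀ is finite
  have hInt0 : (∫⁻ u in Set.Icc (0 : Fin n → ℝ) 1, (‖g₀ u‖₊ : ℝ≥0∞)) ≠ ∞ := by
    have hseq : (Set.Icc (0 : Fin n → ℝ) 1 : Set (Fin n → ℝ)) =ᵐ[volume] IcoP := by
      rw [MeasureTheory.ae_eq_set]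
      constructor
      · have hsub2 : Set.Icc (0 : Fin n → ℝ) 1 \ IcoP ⊆ ⋃ i : Fin n, {x | x i = 1} := by
          rintro x ⟨hxI, hxn⟩
          rw [Set.mem_Icc] at hxI
          rw [hIcoPdef, Set.mem_pi] at hxn
          push_neg at hxn
          obtain ⟨i, _, hi⟩ := hxn
          rw [Set.mem_Ico] at hi
          push_neg at hi
          have h0 : (0:ℝ) ≤ x i := by simpa using hxI.1 i
          have h1 : x i ≤ 1 := by simpa using hxI.2 i
          have h2 : (1:ℝ) ≤ x i := hi h0
          exact Set.mem_iUnion.2 ⟨i, le_antisymm h1 h2⟩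
        refine measure_mono_null hsub2 ?_
        have hle := measure_iUnion_le (μ := (volume : Measure (Fin n → ℝ)))
          (fun i : Fin n => {x : Fin n → ℝ | x i = 1})
        have hz : ∀ i : Fin n, (volume : Measure (Fin n → ℝ)) {x : Fin n → ℝ | x i = 1} = 0 := by
          intro i
          rw [MeasureTheory.volume_pi]
          exact MeasureTheory.Measure.pi_hyperplane _ i 1
        simp only [hz, tsum_zero] at hle
        exact le_antisymm hle zero_le
      · rw [Set.diff_eq_empty.2 hIcoPsub]
        simp
    rw [Measure.restrict_congr_set hseq]
    rw [setLIntegral_congr_fun hIcoPmeas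
      (fun u hu => show (‖g₀ u‖₊ : ℝ≥0∞) = (‖g₁ u‖₊ : ℝ≥0∞) by rw [hg₀Ico u hu])]
    refine ne_top_of_le_ne_top hInt1 (lintegral_mono_set hIcoPsub)
  -- iterates of Fop starting from g₀ are Lipschitz and periodic
  have hiter : ∀ m : ℕ, IsZPeriodic (S.Fop^[m+1] g₀) ∧
      (∃ M : ℝ, 0 ≤ M ∧ ∀ x, |S.Fop^[m+1] g₀ x| ≤ M) ∧
      ∃ K : ℝ≥0, LipschitzWith K (S.Fop^[m+1] g₀) := by
    intro m
    induction m with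
    | zero => simpa using EPAux.core S hφsmooth g₀ hg₀m hg₀per hInt0
    | succ m ih =>
      obtain ⟨hper, ⟨M, hM0, hMb⟩, ⟨K, hK⟩⟩ := ih
      have hm : Measurable (S.Fop^[m+1] g₀) := hK.continuous.measurable
      have hint : (∫⁻ u in Set.Icc (0 : Fin n → ℝ) 1, (‖S.Fop^[m+1] g₀ u‖₊ : ℝ≥0∞)) ≠ ∞ := by
        have hb : ∀ u, (‖S.Fop^[m+1] g₀ u‖₊ : ℝ≥0∞) ≤ ENNReal.ofReal M := fun u => by
          rw [show (‖S.Fop^[m+1] g₀ u‖₊ : ℝ≥0∞) = ENNReal.ofReal |S.Fop^[m+1] g₀ u| from Real.enorm_eq_ofReal_abs _]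
          exact ENNReal.ofReal_le_ofReal (hMb u)
        have hle : (∫⁻ u in Set.Icc (0 : Fin n → ℝ) 1, (‖S.Fop^[m+1] g₀ u‖₊ : ℝ≥0∞)) ≤
            ENNReal.ofReal M * volume (Set.Icc (0 : Fin n → ℝ) 1) := by
          rw [← setLIntegral_const]
          exact setLIntegral_mono measurable_const fun u _ => hb u
        exact ne_top_of_le_ne_top
          (ENNReal.mul_lt_top ENNReal.ofReal_lt_top isCompact_Icc.measure_lt_top).ne hle
      have hres := EPAux.core S hφsmooth _ hm hper hint
      rw [← Function.iterate_succ_apply' S.Fop (m+1) g₀] at hres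
      exact hres
  -- conclude
  obtain ⟨j', rfl⟩ : ∃ j', j = j' + 1 := ⟨j - 1, (Nat.succ_pred_eq_of_pos hj0).symm⟩
  obtain ⟨hper, _, ⟨K, hK⟩⟩ := hiter j'
  refine ⟨S.Fop^[j'+1] g₀, hper, ⟨K, 1, one_pos, holderWith_one.2 hK⟩, ?_⟩
  have hiteq : S.Fop^[j'+1] g = S.Fop^[j'+1] g₀ := by
    rw [Function.iterate_succ_apply, Function.iterate_succ_apply, hFopeq]
  rw [hiteq]
end
end
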